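/- arXiv:2404.09617 — 2 statements merged into one kernel-verified Lean document; each statement's English description precedes it below -/
import Mathlib

section
/- Let (x^k) be a proximal gradient sequence with stepsizes (γ_k) and let x* ∈ argmin φ. Then for every k ≥ 1: φ(x^k) − φ(x*) ≤ ⟨x^k − x*, (x^{k−1} − x^k)/γ_k − (∇f(x^{k−1}) − ∇f(x^k))⟩, and consequently φ(x^k) − φ(x*) ≤ ‖x^k − x*‖ ( ‖x^{k−1} − x^k‖/γ_k + ‖∇f(x^{k−1}) − ∇f(x^k)‖ ). -/
open scoped RealInnerProductSpace BigOperators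
open Filter

noncomputable section

/-- Euclidean space `ℝ^n`. -/
abbrev En (n : ℕ) : Type := EuclideanSpace ℝ (Fin n)

/-- Convexity for an extended-real-valued function. -/
def ERConvex {n : ℕ} (g : En n → EReal) : Prop :=
  ∀ x y : En n, ∀ a b : ℝ, 0 ≤ a → 0 ≤ b → a + b = 1 →
    g (a • x + b • y) ≤ (a : EReal) * g x + (b : EReal) * g y

/-- Properness for an extended-real-valued function: nowhere `⊥`, somewhere finite. -/
def ERProper {n : ℕ} (g : En n → EReal) : Prop :=
  (∀ x, g x ≠ ⊥) ∧ (∃ x, g x ≠ ⊤)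

/-- `p = prox_{γ g}(u)`: `p` minimizes `w ↦ g w + 1/(2γ)‖w − u‖²`. -/
def IsProx {n : ℕ} (g : En n → EReal) (γ : ℝ) (u p : En n) : Prop :=
  ∀ w : En n,
    g p + ((1 / (2 * γ) * ‖p - u‖ ^ 2 : ℝ) : EReal)
      ≤ g w + ((1 / (2 * γ) * ‖w - u‖ ^ 2 : ℝ) : EReal)

/-- The composite objective `φ = f + g`. -/
def phi {n : ℕ} (f : En n → ℝ) (g : En n → EReal) (z : En n) : EReal :=
  (f z : EReal) + g z

/-- `p` is a minimizer of `φ = f + g`. -/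
def IsArgmin {n : ℕ} (f : En n → ℝ) (g : En n → EReal) (p : En n) : Prop :=
  ∀ z : En n, phi f g p ≤ phi f g z

/-- `(x^k)` is a proximal gradient sequence with stepsizes `(γ_k)` and gradient `f'`. -/
def PGSeq {n : ℕ} (f' : En n → En n) (g : En n → EReal)
    (γ : ℕ → ℝ) (x : ℕ → En n) : Prop :=
  ∀ k : ℕ, IsProx g (γ (k + 1)) (x k - γ (k + 1) • f' (x k)) (x (k + 1))

/-- `s^k = x^k − x^{k−1}`. -/
def sk {n : ℕ} (x : ℕ → En n) (k : ℕ) : En n := x k - x (k - 1)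

/-- `y^k = ∇f(x^k) − ∇f(x^{k−1})`. -/
def yk {n : ℕ} (f' : En n → En n) (x : ℕ → En n) (k : ℕ) : En n :=
  f' (x k) - f' (x (k - 1))

/-- `ℓ_k = ⟨y^k, s^k⟩ / ‖s^k‖²`. -/
def ellk {n : ℕ} (f' : En n → En n) (x : ℕ → En n) (k : ℕ) : ℝ :=
  ⟪yk f' x k, sk x k⟫ / ‖sk x k‖ ^ 2

/-- `L_k = ‖y^k‖ / ‖s^k‖`. -/
def Lk {n : ℕ} (f' : En n → En n) (x : ℕ → En n) (k : ℕ) : ℝ :=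
  ‖yk f' x k‖ / ‖sk x k‖

/-- `c_k = ‖y^k‖² / ⟨y^k, s^k⟩`. -/
def ck {n : ℕ} (f' : En n → En n) (x : ℕ → En n) (k : ℕ) : ℝ :=
  ‖yk f' x k‖ ^ 2 / ⟪yk f' x k, sk x k⟫

/-- `P_k = φ(x^k) − min φ`, as a real number (`x*` a minimizer of `φ`). -/
def Pk {n : ℕ} (f : En n → ℝ) (g : En n → EReal) (xstar : En n)
    (x : ℕ → En n) (k : ℕ) : ℝ :=
  (phi f g (x k)).toReal - (phi f g xstar).toReal

/-- `P_k^min = min_{i ≤ k} P_i`. -/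
def PkMin {n : ℕ} (f : En n → ℝ) (g : En n → EReal) (xstar : En n)
    (x : ℕ → En n) (k : ℕ) : ℝ :=
  (Finset.range (k + 1)).inf' Finset.nonempty_range_add_one (Pk f g xstar x)

/-- `U_k^r(x*) = ½‖x^k − x*‖² + ½‖x^k − x^{k−1}‖² + γ_k (1 + r ρ_k) P_{k−1}`. -/
def Uk {n : ℕ} (f : En n → ℝ) (g : En n → EReal) (r : ℝ) (xstar : En n)
    (γ : ℕ → ℝ) (x : ℕ → En n) (k : ℕ) : ℝ :=
  1 / 2 * ‖x k - xstar‖ ^ 2 + 1 / 2 * ‖x k - x (k - 1)‖ ^ 2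
    + γ k * (1 + r * (γ k / γ (k - 1))) * Pk f g xstar x (k - 1)

/-- Property (p1): `1 + r ρ_k − r ρ_{k+1}² ≥ 0` for all `k ≥ 1`. -/
def P1 (γ : ℕ → ℝ) (r : ℝ) : Prop :=
  ∀ k : ℕ, 1 ≤ k →
    0 ≤ 1 + r * (γ k / γ (k - 1)) - r * (γ (k + 1) / γ k) ^ 2

/-- Property (p2): `1/2 − ρ_{k+1}² [γ_k² L_k² − (2−r) γ_k ℓ_k + 1 − r] ≥ 0` for all `k ≥ 1`. -/
def P2 {n : ℕ} (f' : En n → En n) (x : ℕ → En n) (γ : ℕ → ℝ) (r : ℝ) : Prop :=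
  ∀ k : ℕ, 1 ≤ k →
    0 ≤ 1 / 2 - (γ (k + 1) / γ k) ^ 2 *
      ((γ k) ^ 2 * (Lk f' x k) ^ 2 - (2 - r) * γ k * ellk f' x k + 1 - r)

/-- Property (p3): for every `k ≥ 1`, either `γ_{k+1} ≥ γ_k` or there is
`1 ≤ j ≤ k` with `min{γ_j, γ_{k+1}} ≥ λ_min ‖x^j − x^{j−1}‖^{1−ν}`. -/
def P3 {n : ℕ} (x : ℕ → En n) (γ : ℕ → ℝ) (ν lammin : ℝ) : Prop :=
  ∀ k : ℕ, 1 ≤ k →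
    γ k ≤ γ (k + 1) ∨
      ∃ j : ℕ, 1 ≤ j ∧ j ≤ k ∧
        lammin * ‖x j - x (j - 1)‖ ^ (1 - ν) ≤ min (γ j) (γ (k + 1))

/-- `L` is a `ν`-Hölder modulus for `f'` on `Ω`. -/
def HolderOn {n : ℕ} (f' : En n → En n) (ν L : ℝ) (Ω : Set (En n)) : Prop :=
  ∀ x ∈ Ω, ∀ y ∈ Ω, ‖f' x - f' y‖ ≤ L * ‖x - y‖ ^ ν

/-- `f'` is locally `ν`-Hölder continuous. -/
def LocallyHolder {n : ℕ} (f' : En n → En n) (ν : ℝ) : Prop :=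
  ∀ Ω : Set (En n), IsCompact Ω → Convex ℝ Ω → ∃ L > 0, HolderOn f' ν L Ω

/-- First term in the adaPG^{r,r/2} stepsize update. -/
def adaT1 (γ : ℕ → ℝ) (r : ℝ) (k : ℕ) : ℝ :=
  γ k * Real.sqrt (1 / r + γ k / γ (k - 1))

/-- The bracket `γ_k² L_k² − (2 − r) γ_k ℓ_k + 1 − r` in the adaPG^{r,r/2} update. -/
def adaBrk {n : ℕ} (f' : En n → En n) (x : ℕ → En n) (γ : ℕ → ℝ) (r : ℝ) (k : ℕ) : ℝ :=
  (γ k) ^ 2 * (Lk f' x k) ^ 2 - (2 - r) * γ k * ellk f' x k + 1 - r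

/-- The adaPG^{r,r/2} stepsize: the minimum of the two terms, the second
being `+∞` (inactive) when the bracket is nonpositive. -/
def adaSafe {n : ℕ} (f' : En n → En n) (x : ℕ → En n) (γ : ℕ → ℝ) (r : ℝ) (k : ℕ) : ℝ :=
  if 0 < adaBrk f' x γ r k then
    min (adaT1 γ r k) (γ k / Real.sqrt (2 * adaBrk f' x γ r k))
  else adaT1 γ r k

/-- The stepsizes are generated by the adaPG^{r,r/2} update (for `k ≥ 1`). -/
def AdaPGUpdate {n : ℕ} (f' : En n → En n) (x : ℕ → En n) (γ : ℕ → ℝ) (r : ℝ) : Prop :=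
  ∀ k : ℕ, 1 ≤ k → γ (k + 1) = adaSafe f' x γ r k

/-- `λ_k = γ_k / ‖x^k − x^{k−1}‖^{1−ν}`. -/
def lamk {n : ℕ} (x : ℕ → En n) (γ : ℕ → ℝ) (ν : ℝ) (k : ℕ) : ℝ :=
  γ k / ‖x k - x (k - 1)‖ ^ (1 - ν)

/-!
The optimality condition of the prox step defining `x^k` says that
`(x^{k-1} - x^k)/γ_k - ∇f(x^{k-1})` is a subgradient of `g` at `x^k`. Adding the gradient
inequality of the convex function `f` at `x^k`, both evaluated at `x*`, bounds
`φ(x^k) - φ(x*)` by the stated inner product; Cauchy–Schwarz and the triangle inequality give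
the norm bound.
-/

open Set

theorem le_of_forall_le_add_mul {a b C : ℝ} (h : ∀ t ∈ Ioc (0 : ℝ) 1, a ≤ b + t * C) :
    a ≤ b := by
  have hlim : Filter.Tendsto (fun t : ℝ => b + t * C) (nhdsWithin 0 (Ioi 0)) (nhds b) := by
    have : Continuous fun t : ℝ => b + t * C := by fun_prop
    simpa using (this.tendsto 0).mono_left nhdsWithin_le_nhds
  exact ge_of_tendsto hlim (Filter.mem_of_superset (Ioc_mem_nhdsGT zero_lt_one) h)

theorem ConvexOn.add_apply_sub_le_of_hasFDerivAt {E : Type*} [NormedAddCommGroup E]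
    [NormedSpace ℝ E] {s : Set E} {f : E → ℝ} {f' : E →L[ℝ] ℝ} {p w : E}
    (hf : ConvexOn ℝ s f) (hp : p ∈ s) (hw : w ∈ s) (hfp : HasFDerivAt f f' p) :
    f p + f' (w - p) ≤ f w := by
  set ℓ : ℝ →ᵃ[ℝ] E := AffineMap.lineMap p w
  have hderiv : HasDerivAt (f ∘ ℓ) (f' (w - p)) 0 :=
    HasFDerivAt.comp_hasDerivAt (f := ℓ) (0 : ℝ) (by simpa [ℓ] using hfp)
      AffineMap.hasDerivAt_lineMap
  have := (hf.comp_affineMap ℓ).le_slope_of_hasDerivAt (x := 0) (y := 1) (by simpa [ℓ])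
    (by simpa [ℓ]) zero_lt_one hderiv
  simp only [slope_def_field, Function.comp_apply, AffineMap.lineMap_apply_one,
    AffineMap.lineMap_apply_zero, sub_zero, div_one, ℓ] at this
  linarith

theorem ERConvex.apply_segment_le {n : ℕ} {g : En n → EReal} (hg : ERConvex g)
    {p w : En n} {gp gw t : ℝ} (hgp : g p = gp) (hgw : g w = gw) (ht₀ : 0 ≤ t) (ht₁ : t ≤ 1) :
    g (p + t • (w - p)) ≤ ((gp + t * (gw - gp) : ℝ) : EReal) := by
  have h := hg p w (1 - t) t (by linarith) ht₀ (by ring)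
  rw [hgp, hgw, ← EReal.coe_mul, ← EReal.coe_mul, ← EReal.coe_add] at h
  convert h using 2
  · module
  · ring

theorem IsProx.ne_top {n : ℕ} {g : En n → EReal} {γ : ℝ} {u p z : En n}
    (hprox : IsProx g γ u p) (hz : g z ≠ ⊤) : g p ≠ ⊤ := by
  intro hp
  have h := hprox z
  rw [hp, EReal.top_add_coe, top_le_iff] at h
  exact EReal.add_ne_top hz (EReal.coe_ne_top _) h

theorem IsProx.add_le {n : ℕ} {g : En n → EReal} {γ : ℝ} {u p w : En n} {gp r : ℝ}
    (hprox : IsProx g γ u p) (hgp : g p = gp) (hgw : g w ≤ r) :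
    gp + 1 / (2 * γ) * ‖p - u‖ ^ 2 ≤ r + 1 / (2 * γ) * ‖w - u‖ ^ 2 := by
  have h := (hprox w).trans (add_le_add_left hgw _)
  rwa [hgp, ← EReal.coe_add, ← EReal.coe_add, EReal.coe_le_coe_iff] at h

theorem IsProx.sub_le_inner {n : ℕ} {g : En n → EReal} {γ : ℝ} {u p w : En n} {gp gw : ℝ}
    (hprox : IsProx g γ u p) (hg : ERConvex g) (hγ : 0 < γ)
    (hgp : g p = gp) (hgw : g w = gw) :
    gp - gw ≤ ⟪γ⁻¹ • (u - p), p - w⟫ := by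
  have key : ∀ t ∈ Ioc (0 : ℝ) 1,
      gp - gw ≤ ⟪γ⁻¹ • (u - p), p - w⟫ + t * ((2 * γ)⁻¹ * ‖w - p‖ ^ 2) := by
    rintro t ⟨ht₀, ht₁⟩
    have h := hprox.add_le hgp (hg.apply_segment_le hgp hgw ht₀.le ht₁)
    have hsq : ‖p + t • (w - p) - u‖ ^ 2
        = ‖p - u‖ ^ 2 + 2 * t * ⟪p - u, w - p⟫ + t ^ 2 * ‖w - p‖ ^ 2 := by
      rw [show p + t • (w - p) - u = (p - u) + t • (w - p) by abel, norm_add_sq_real,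
        inner_smul_right, norm_smul, Real.norm_of_nonneg ht₀.le]
      ring
    have hinner : ⟪γ⁻¹ • (u - p), p - w⟫ = γ⁻¹ * ⟪p - u, w - p⟫ := by
      rw [inner_smul_left, ← inner_neg_neg, neg_sub, neg_sub]
      simp
    rw [hsq] at h
    rw [hinner]
    have : t * (gp - gw) ≤ t * (γ⁻¹ * ⟪p - u, w - p⟫ + t * ((2 * γ)⁻¹ * ‖w - p‖ ^ 2)) := by
      field_simp at h ⊢
      nlinarith
    exact le_of_mul_le_mul_left this ht₀
  exact le_of_forall_le_add_mul key

theorem IsProx.gap_le_inner_residual {n : ℕ} {f : En n → ℝ} {f' : En n → En n}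
    {g : En n → EReal} {γ : ℝ} {y p w : En n} {gp gw : ℝ}
    (hprox : IsProx g γ (y - γ • f' y) p) (hf : ConvexOn ℝ univ f)
    (hfp : HasGradientAt f (f' p) p) (hg : ERConvex g) (hγ : 0 < γ)
    (hgp : g p = gp) (hgw : g w = gw) :
    (f p + gp) - (f w + gw) ≤ ⟪p - w, γ⁻¹ • (y - p) - (f' y - f' p)⟫ := by
  have hgrad := hf.add_apply_sub_le_of_hasFDerivAt (mem_univ p) (mem_univ w) hfp.hasFDerivAt
  have hsub := hprox.sub_le_inner hg hγ hgp hgw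
  have hres : γ⁻¹ • (y - p) - (f' y - f' p) = γ⁻¹ • (y - γ • f' y - p) + f' p := by
    rw [sub_right_comm, smul_sub _ (y - p), smul_smul, inv_mul_cancel₀ hγ.ne', one_smul]
    abel
  rw [InnerProductSpace.toDual_apply_apply] at hgrad
  rw [hres, real_inner_comm, inner_add_left]
  simp only [inner_sub_right] at hgrad hsub ⊢
  linarith

theorem statement_9_general {n : ℕ} (f : En n → ℝ) (f' : En n → En n) (g : En n → EReal)
    (hfconv : ConvexOn ℝ Set.univ f)
    (hf' : ∀ z, HasGradientAt f (f' z) z)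
    (hgproper : ERProper g) (hgconv : ERConvex g)
    (γ : ℕ → ℝ) (hγ : ∀ k, 0 < γ k)
    (x : ℕ → En n) (hx : PGSeq f' g γ x)
    (xstar : En n) (hstar : IsArgmin f g xstar) :
    ∀ k : ℕ, 1 ≤ k →
      Pk f g xstar x k ≤
        ⟪x k - xstar, (γ k)⁻¹ • (x (k - 1) - x k) - (f' (x (k - 1)) - f' (x k))⟫ ∧
      Pk f g xstar x k ≤
        ‖x k - xstar‖ * (‖x (k - 1) - x k‖ / γ k + ‖f' (x (k - 1)) - f' (x k)‖) := by
  intro k hk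
  obtain ⟨j, rfl⟩ : ∃ j, k = j + 1 := ⟨k - 1, by omega⟩
  obtain ⟨hbot, z, hz⟩ := hgproper
  have hprox := hx j
  obtain ⟨gp, hgp⟩ : ∃ r : ℝ, g (x (j + 1)) = r :=
    ⟨_, (EReal.coe_toReal (hprox.ne_top hz) (hbot _)).symm⟩
  have hstar_ne_top : g xstar ≠ ⊤ := by
    intro htop
    have h := hstar (x (j + 1))
    rw [phi, phi, htop, hgp, EReal.coe_add_top, top_le_iff, ← EReal.coe_add] at h
    exact EReal.coe_ne_top _ h
  obtain ⟨gs, hgs⟩ : ∃ r : ℝ, g xstar = r :=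
    ⟨_, (EReal.coe_toReal hstar_ne_top (hbot _)).symm⟩
  have hgap : Pk f g xstar x (j + 1) = (f (x (j + 1)) + gp) - (f xstar + gs) := by
    rw [Pk, phi, phi, hgp, hgs, ← EReal.coe_add, ← EReal.coe_add, EReal.toReal_coe,
      EReal.toReal_coe]
  have hinner := hprox.gap_le_inner_residual hfconv (hf' _) hgconv (hγ _) hgp hgs
  rw [← hgap] at hinner
  rw [Nat.add_sub_cancel]
  refine ⟨hinner, hinner.trans ((real_inner_le_norm _ _).trans ?_)⟩
  gcongr
  calc _ ≤ ‖(γ (j + 1))⁻¹ • (x j - x (j + 1))‖ + ‖f' (x j) - f' (x (j + 1))‖ := norm_sub_le _ _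
    _ = _ := by rw [norm_smul, norm_inv, Real.norm_of_nonneg (hγ _).le, inv_mul_eq_div]

/-- the fixed-point-residual bound on the optimality gap. -/
theorem statement_9 {n : ℕ} (f : En n → ℝ) (f' : En n → En n) (g : En n → EReal)
    (hfconv : ConvexOn ℝ Set.univ f)
    (hf' : ∀ z, HasGradientAt f (f' z) z)
    (hgproper : ERProper g) (hglsc : LowerSemicontinuous g) (hgconv : ERConvex g)
    (γ : ℕ → ℝ) (hγ : ∀ k, 0 < γ k)
    (x : ℕ → En n) (hx : PGSeq f' g γ x)
    (xstar : En n) (hstar : IsArgmin f g xstar) :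
    ∀ k : ℕ, 1 ≤ k →
      Pk f g xstar x k ≤
        ⟪x k - xstar, (γ k)⁻¹ • (x (k - 1) - x k) - (f' (x (k - 1)) - f' (x k))⟫ ∧
      Pk f g xstar x k ≤
        ‖x k - xstar‖ * (‖x (k - 1) - x k‖ / γ k + ‖f' (x (k - 1)) - f' (x k)‖) :=
  statement_9_general f f' g hfconv hf' hgproper hgconv γ hγ x hx xstar hstar

end
end

section
/- Suppose ∇f is globally Lipschitz continuous with constant L_f > 0, and let (x^k) be a proximal gradient sequence whose stepsizes are generated by the adaPG^{r,r/2} update with r = 1, i.e. γ_{k+1} = min{ γ_k √(1 + γ_k/γ_{k−1}), γ_k / √(2 [γ_k² L_k² − γ_k ℓ_k]_+) }. Then for every k ≥ 1, γ_{k+1} ≥ min{ γ_k, 1/(√2 L_f) }; consequently γ_k ≥ min{ γ_1, 1/(√2 L_f) } for all k ≥ 1. -/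
open scoped RealInnerProductSpace BigOperators
open Filter

noncomputable section

/-! Convexity of `f` gives `ℓ_k ≥ 0`, so with `r = 1` the bracket `γ_k² L_k² − γ_k ℓ_k` is at most
`(γ_k L_f)²` and the second term of the update is at least `1/(√2 L_f)`, while the first term is
at least `γ_k`. The uniform bound then follows by induction on `k`. -/

theorem ConvexOn.inner_sub_sub_nonneg_of_hasGradientAt {F : Type*} [NormedAddCommGroup F]
    [InnerProductSpace ℝ F] [CompleteSpace F] {f : F → ℝ} {u v a b : F} (hf : ConvexOn ℝ Set.univ f)
    (ha : HasGradientAt f u a) (hb : HasGradientAt f v b) :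
    0 ≤ ⟪v - u, b - a⟫ := by
  have hline : ConvexOn ℝ Set.univ (f ∘ AffineMap.lineMap (k := ℝ) a b) := by
    simpa using hf.comp_affineMap (AffineMap.lineMap a b)
  have hderiv {t : ℝ} {w : F} (hw : HasGradientAt f w (AffineMap.lineMap (k := ℝ) a b t)) :
      HasDerivAt (f ∘ AffineMap.lineMap (k := ℝ) a b) ⟪w, b - a⟫ t :=
    hw.hasFDerivAt.comp_hasDerivAt t AffineMap.hasDerivAt_lineMap
  have h0 := hline.le_slope_of_hasDerivAt (Set.mem_univ 0) (Set.mem_univ 1) one_pos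
    (hderiv (by simpa using ha))
  have h1 := hline.slope_le_of_hasDerivAt (Set.mem_univ 0) (Set.mem_univ 1) one_pos
    (hderiv (by simpa using hb))
  rw [inner_sub_left]
  linarith

theorem one_div_sqrt_two_mul_le_div_sqrt {γ L b : ℝ} (hγ : 0 < γ) (hL : 0 < L) (hb : 0 < b)
    (hbL : b ≤ (γ * L) ^ 2) : 1 / (Real.sqrt 2 * L) ≤ γ / Real.sqrt (2 * b) := by
  have hsqrt : Real.sqrt (2 * b) ≤ Real.sqrt 2 * (γ * L) := by
    rw [Real.sqrt_mul zero_le_two]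
    gcongr
    exact (Real.sqrt_le_sqrt hbL).trans_eq (Real.sqrt_sq (by positivity))
  calc 1 / (Real.sqrt 2 * L) = γ / (Real.sqrt 2 * (γ * L)) := by field_simp
    _ ≤ γ / Real.sqrt (2 * b) := by gcongr

theorem min_le_of_forall_min_le_succ {u : ℕ → ℝ} {c : ℝ}
    (h : ∀ k, 1 ≤ k → min (u k) c ≤ u (k + 1)) : ∀ k, 1 ≤ k → min (u 1) c ≤ u k := by
  intro k hk
  induction k, hk using Nat.le_induction with
  | base => exact min_le_left _ _
  | succ m hm ih => exact (le_min ih (min_le_right _ _)).trans (h m hm)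

section AdaPG

variable {n : ℕ} {f' : En n → En n} {x : ℕ → En n} {γ : ℕ → ℝ} {k : ℕ}

theorem le_adaT1 {r : ℝ} (hr0 : 0 < r) (hr1 : r ≤ 1) (hγk : 0 ≤ γ k) (hγk' : 0 ≤ γ (k - 1)) :
    γ k ≤ adaT1 γ r k := by
  have h : 1 ≤ Real.sqrt (1 / r + γ k / γ (k - 1)) := by
    rw [Real.one_le_sqrt]
    have : 1 ≤ 1 / r := by rw [le_div_iff₀ hr0]; linarith
    have : 0 ≤ γ k / γ (k - 1) := by positivity
    linarith
  exact le_mul_of_one_le_right hγk h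

theorem adaBrk_one_le {Lf : ℝ} (hLf : 0 ≤ Lf) (hγk : 0 ≤ γ k)
    (hmono : 0 ≤ ⟪yk f' x k, sk x k⟫) (hLip : ‖yk f' x k‖ ≤ Lf * ‖sk x k‖) :
    adaBrk f' x γ 1 k ≤ (γ k * Lf) ^ 2 := by
  have hell : 0 ≤ ellk f' x k := by unfold ellk; positivity
  have hLk : Lk f' x k ≤ Lf := div_le_of_le_mul₀ (norm_nonneg _) hLf hLip
  have hLk0 : 0 ≤ Lk f' x k := by unfold Lk; positivity
  have : (γ k) ^ 2 * (Lk f' x k) ^ 2 ≤ (γ k) ^ 2 * Lf ^ 2 := by gcongr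
  have : 0 ≤ γ k * ellk f' x k := mul_nonneg hγk hell
  unfold adaBrk
  nlinarith

theorem min_le_adaSafe {r Lf : ℝ} (hLf : 0 < Lf) (hγk : 0 < γ k) (hT1 : γ k ≤ adaT1 γ r k)
    (hbrk : adaBrk f' x γ r k ≤ (γ k * Lf) ^ 2) :
    min (γ k) (1 / (Real.sqrt 2 * Lf)) ≤ adaSafe f' x γ r k := by
  unfold adaSafe
  split_ifs with hpos
  · exact le_min ((min_le_left _ _).trans hT1)
      ((min_le_right _ _).trans (one_div_sqrt_two_mul_le_div_sqrt hγk hLf hpos hbrk))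
  · exact (min_le_left _ _).trans hT1

end AdaPG

theorem statement_13_general {n : ℕ} (f : En n → ℝ) (f' : En n → En n)
    (hfconv : ConvexOn ℝ Set.univ f)
    (hf' : ∀ z, HasGradientAt f (f' z) z)
    (Lf : ℝ) (hLf : 0 < Lf)
    (hLip : ∀ a b : En n, ‖f' a - f' b‖ ≤ Lf * ‖a - b‖)
    (γ : ℕ → ℝ) (hγ : ∀ k, 0 < γ k)
    (x : ℕ → En n)
    (hupd : AdaPGUpdate f' x γ 1) :
    (∀ k : ℕ, 1 ≤ k → min (γ k) (1 / (Real.sqrt 2 * Lf)) ≤ γ (k + 1)) ∧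
      ∀ k : ℕ, 1 ≤ k → min (γ 1) (1 / (Real.sqrt 2 * Lf)) ≤ γ k := by
  have step : ∀ k : ℕ, 1 ≤ k → min (γ k) (1 / (Real.sqrt 2 * Lf)) ≤ γ (k + 1) := by
    intro k hk
    rw [hupd k hk]
    refine min_le_adaSafe hLf (hγ k) (le_adaT1 one_pos le_rfl (hγ k).le (hγ _).le) ?_
    exact adaBrk_one_le hLf.le (hγ k).le
      (hfconv.inner_sub_sub_nonneg_of_hasGradientAt (hf' _) (hf' _)) (hLip _ _)
  exact ⟨step, min_le_of_forall_min_le_succ step⟩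

/-- with globally `L_f`-Lipschitz `∇f` and the adaPG^{1,1/2} update,
`γ_{k+1} ≥ min{γ_k, 1/(√2 L_f)}`, hence `γ_k ≥ min{γ_1, 1/(√2 L_f)}` for all `k ≥ 1`. -/
theorem statement_13 {n : ℕ} (f : En n → ℝ) (f' : En n → En n) (g : En n → EReal)
    (hfconv : ConvexOn ℝ Set.univ f)
    (hf' : ∀ z, HasGradientAt f (f' z) z)
    (hgproper : ERProper g) (hglsc : LowerSemicontinuous g) (hgconv : ERConvex g)
    (hargmin : ∃ p, IsArgmin f g p)
    (Lf : ℝ) (hLf : 0 < Lf)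
    (hLip : ∀ a b : En n, ‖f' a - f' b‖ ≤ Lf * ‖a - b‖)
    (γ : ℕ → ℝ) (hγ : ∀ k, 0 < γ k)
    (x : ℕ → En n) (hx : PGSeq f' g γ x)
    (hxne : ∀ k : ℕ, 1 ≤ k → x k ≠ x (k - 1))
    (hupd : AdaPGUpdate f' x γ 1) :
    (∀ k : ℕ, 1 ≤ k → min (γ k) (1 / (Real.sqrt 2 * Lf)) ≤ γ (k + 1)) ∧
      ∀ k : ℕ, 1 ≤ k → min (γ 1) (1 / (Real.sqrt 2 * Lf)) ≤ γ k :=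
  statement_13_general f f' hfconv hf' Lf hLf hLip γ hγ x hupd

end
end
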